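/- arXiv:math/0301160 — 2 statements merged into one kernel-verified Lean document; each statement's English description precedes it below -/
import Mathlib

section
/- For every ε ∈ (0,1) and every real x with 0 ≤ x ≤ ε, and for every positive integer s and integer f with 1 ≤ f ≤ 4s, if g(f) = ((s+f)p/s)^s ((s+f)(1-p)/f)^f with p ∈ (0,1) fixed, then whenever |fp - (1-p)s| > 2xs one has g(f) ≤ exp(-(1/3) s x² p² (1-p)). -/
/-!
Put `y = (f p - (1 - p) s) / s`. The two factors are `1 + y` and `1 - (s / f) y`, so
`1 + u ≤ eᵘ` bounds the second power by `e^{-s y}`. As `-1 < y ≤ f / s ≤ 4`, one has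
`log (1 + y) ≤ y - y² / 10`, whence `g(f) ≤ e^{-s y² / 10}`; finally the deviation hypothesis is
`|y| > 2x`, and `p² (1 - p) ≤ 1`.
-/

open Real Finset

namespace Real

theorem log_one_add_le_sub_sq_div_of_nonneg {y : ℝ} (hy : 0 ≤ y) :
    log (1 + y) ≤ y - y ^ 2 / (2 * (1 + y)) := by
  -- `x = y / (2 + y)` is the point with `(1 + x) / (1 - x) = 1 + y`
  have hx : y / (2 + y) < 1 := (div_lt_one (by positivity)).2 (by linarith)
  have h := log_div_le_sum_range_add (div_nonneg hy (by positivity)) hx 0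
  have hquot : (1 + y / (2 + y)) / (1 - y / (2 + y)) = 1 + y := by
    field_simp
    ring
  have hy1 : 0 < 1 + y := by linarith
  have hbound : y / (2 + y) / (1 - (y / (2 + y)) ^ 2) = (y - y ^ 2 / (2 * (1 + y))) / 2 := by
    rw [show 1 - (y / (2 + y)) ^ 2 = 4 * (1 + y) / (2 + y) ^ 2 by field_simp; ring]
    field_simp
    ring
  simp only [hquot, range_zero, sum_empty, zero_add, mul_zero, pow_one, hbound] at h
  linarith

theorem log_one_sub_le {t : ℝ} (h0 : 0 ≤ t) (h1 : t < 1) : log (1 - t) ≤ -t - t ^ 2 / 2 := by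
  have hsum := hasSum_pow_div_log_of_abs_lt_one (abs_lt.2 ⟨by linarith, h1⟩)
  have h := sum_le_hasSum (range 2) (fun n _ ↦ by positivity) hsum
  norm_num [sum_range_succ] at h
  linarith

theorem log_one_add_le_sub_sq_div {y c : ℝ} (hy : -1 < y) (hyc : y ≤ c) (hc : 0 ≤ c) :
    log (1 + y) ≤ y - y ^ 2 / (2 * (1 + c)) := by
  rcases le_or_gt 0 y with hy0 | hy0
  · calc log (1 + y) ≤ y - y ^ 2 / (2 * (1 + y)) := log_one_add_le_sub_sq_div_of_nonneg hy0
      _ ≤ y - y ^ 2 / (2 * (1 + c)) := by gcongr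
  · calc log (1 + y) = log (1 - -y) := by rw [sub_neg_eq_add]
      _ ≤ y - y ^ 2 / 2 := by simpa using log_one_sub_le (neg_nonneg.2 hy0.le) (by linarith)
      _ ≤ y - y ^ 2 / (2 * (1 + c)) := by gcongr; linarith

theorem one_add_pow_mul_one_sub_pow_le_exp {a b : ℕ} (hb : b ≠ 0) {y c : ℝ} (hy : -1 < y)
    (hyc : y ≤ c) (hc : 0 ≤ c) (h : 0 ≤ 1 - a / b * y) :
    (1 + y) ^ a * (1 - a / b * y) ^ b ≤ exp (-(a * y ^ 2 / (2 * (1 + c)))) := by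
  have h₁ : (1 + y) ^ a ≤ exp (a * (y - y ^ 2 / (2 * (1 + c)))) := by
    rw [exp_nat_mul]
    gcongr
    · linarith
    · exact le_exp_of_log_le (log_one_add_le_sub_sq_div hy hyc hc)
  have h₂ : (1 - a / b * y) ^ b ≤ exp (b * -(a / b * y)) := by
    rw [exp_nat_mul]
    gcongr
    linarith [add_one_le_exp (-(a / b * y))]
  calc (1 + y) ^ a * (1 - a / b * y) ^ b
      ≤ exp (a * (y - y ^ 2 / (2 * (1 + c)))) * exp (b * -(a / b * y)) := by gcongr
    _ = exp (-(a * y ^ 2 / (2 * (1 + c)))) := by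
      rw [← exp_add]
      congr 1
      field_simp
      ring

end Real

theorem stmt4_general (x : ℝ) (hx0 : 0 ≤ x)
    (p : ℝ) (hp : p ∈ Set.Ioo (0:ℝ) 1) (s : ℕ) (hs : 0 < s)
    (f : ℕ) (hf1 : 1 ≤ f) (hf4 : f ≤ 4*s)
    (hdev : |(f:ℝ)*p - (1-p)*(s:ℝ)| > 2*x*(s:ℝ)) :
    (((s:ℝ)+f)*p/s)^s * (((s:ℝ)+f)*(1-p)/f)^f
      ≤ Real.exp (-(1/3) * s * x^2 * p^2 * (1-p)) := by
  obtain ⟨hp0, hp1⟩ := hp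
  have hS : (0 : ℝ) < s := by exact_mod_cast hs
  have hF : (0 : ℝ) < f := by exact_mod_cast hf1
  have hF4 : (f : ℝ) ≤ 4 * s := by exact_mod_cast hf4
  set y := (s + f) * p / s - 1 with hy_def
  have hy : y = (f * p - (1 - p) * s) / s := by rw [hy_def]; field_simp; ring
  have h₁ : (s + f) * p / s = 1 + y := by ring
  have h₂ : (s + f) * (1 - p) / f = 1 - s / f * y := by rw [hy_def]; field_simp; ring
  have hy_gt : -1 < y := by
    have : 0 < (s + f) * p / s := by positivity
    linarith
  have hy_le : y ≤ 4 := by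
    rw [hy, div_le_iff₀ hS]; nlinarith
  have hy_abs : 2 * x < |y| := by
    rw [hy, abs_div, abs_of_pos hS, lt_div_iff₀ hS]; exact hdev
  rw [h₁, h₂]
  calc (1 + y) ^ s * (1 - s / f * y) ^ f ≤ exp (-(s * y ^ 2 / (2 * (1 + 4)))) :=
        one_add_pow_mul_one_sub_pow_le_exp (by omega) hy_gt hy_le (by norm_num)
          (by rw [← h₂]; have := sub_pos.2 hp1; positivity)
    _ ≤ exp (-(1/3) * s * x^2 * p^2 * (1-p)) := by
      gcongr
      have hy_sq : 4 * x ^ 2 ≤ y ^ 2 := by nlinarith [abs_nonneg y, sq_abs y]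
      have hp3 : p ^ 2 * (1 - p) ≤ 1 := by nlinarith
      nlinarith [mul_nonneg (mul_nonneg hS.le (sq_nonneg x)) (sub_nonneg.2 hp3)]

theorem stmt4 (ε : ℝ) (hε : ε ∈ Set.Ioo (0:ℝ) 1) (x : ℝ) (hx0 : 0 ≤ x) (hxε : x ≤ ε)
    (p : ℝ) (hp : p ∈ Set.Ioo (0:ℝ) 1) (s : ℕ) (hs : 0 < s)
    (f : ℕ) (hf1 : 1 ≤ f) (hf4 : f ≤ 4*s)
    (hdev : |(f:ℝ)*p - (1-p)*(s:ℝ)| > 2*x*(s:ℝ)) :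
    (((s:ℝ)+f)*p/s)^s * (((s:ℝ)+f)*(1-p)/f)^f
      ≤ Real.exp (-(1/3) * s * x^2 * p^2 * (1-p)) :=
  stmt4_general x hx0 p hp s hs f hf1 hf4 hdev
end

section
/- Let 0 < p < 1/2, let x > 0 be small, and let nonnegative reals a_{s,f} (indexed by positive integers s, f with f ≤ 4s) satisfy a_{s,f} ≤ p^{-s}(1-p)^{-f} for all choices of p ∈ (0,1) (i.e. a_{s,f} ≤ inf_{q∈(0,1)} q^{-s}(1-q)^{-f}). Then for each fixed s, ∑_{f: |fp-(1-p)s| > 2xs, 1 ≤ f ≤ 4s} a_{s,f}·p^s·(1-p)^f ≤ 4s·exp(-(1/3)·s·x²·p²·(1-p)). -/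
/-!
Exponential tilting. For every `q ∈ (0,1)` the hypothesis gives
`a p^s (1-p)^f ≤ (p/q)^s ((1-p)/(1-q))^f`, and `y ≤ exp (y - 1)` bounds this by
`exp (s (p/q - 1) + f ((1-p)/(1-q) - 1))`. Taking `q` halfway between `p` and `s/(s+f)`, the
exponent equals `-(fp - (1-p)s)² / (4 (s+f) q (1-q)) ≤ -(fp - (1-p)s)² / (s+f)`. On the tail
`|fp - (1-p)s| > 2xs` with `f ≤ 4s` this is at most `-(4/5) s x²`, and there are at most `4s`
terms.
-/

open Real

lemma pow_le_exp_mul_sub_one {y : ℝ} (hy : 0 ≤ y) (n : ℕ) : y ^ n ≤ exp (n * (y - 1)) := by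
  rw [exp_nat_mul]
  exact pow_le_pow_left₀ hy (by linarith [add_one_le_exp (y - 1)]) n

lemma pow_mul_pow_le_tilt {p q : ℝ} (hp0 : 0 ≤ p) (hp1 : p ≤ 1) (hq0 : 0 < q) (hq1 : q < 1)
    (s f : ℕ) :
    p ^ s * (1 - p) ^ f
      ≤ q ^ s * (1 - q) ^ f * exp (s * (p / q - 1) + f * ((1 - p) / (1 - q) - 1)) := by
  have h1q : 0 < 1 - q := by linarith
  calc p ^ s * (1 - p) ^ f = q ^ s * (1 - q) ^ f * ((p / q) ^ s * ((1 - p) / (1 - q)) ^ f) := by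
        rw [mul_mul_mul_comm, ← mul_pow, ← mul_pow, mul_div_cancel₀ _ hq0.ne',
          mul_div_cancel₀ _ h1q.ne']
    _ ≤ q ^ s * (1 - q) ^ f * (exp (s * (p / q - 1)) * exp (f * ((1 - p) / (1 - q) - 1))) := by
        gcongr
        · exact pow_le_exp_mul_sub_one (by positivity) s
        · exact pow_le_exp_mul_sub_one (div_nonneg (by linarith) h1q.le) f
    _ = _ := by rw [exp_add]

/-- The tilt `q = (p + s/(s+f))/2` is the midpoint of `p` and the maximiser `s/(s+f)`. -/
lemma exists_tilt_exponent_le {p s f : ℝ} (hp0 : 0 ≤ p) (hp1 : p < 1) (hs : 0 < s)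
    (hf : 0 ≤ f) :
    ∃ q, 0 < q ∧ q < 1 ∧
      s * (p / q - 1) + f * ((1 - p) / (1 - q) - 1) ≤ -(f * p - (1 - p) * s) ^ 2 / (s + f) := by
  have hn : 0 < s + f := by linarith
  have hsn : s / (s + f) ≤ 1 := (div_le_one hn).2 (by linarith)
  set q := (p + s / (s + f)) / 2 with hq
  have hq0 : 0 < q := by positivity
  have hq1 : q < 1 := by linarith
  have h1q : 0 < 1 - q := by linarith
  refine ⟨q, hq0, hq1, ?_⟩
  have hstep : q - p = -(f * p - (1 - p) * s) / (2 * (s + f)) := by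
    rw [hq]; field_simp; ring
  have hslope : f * q - (1 - q) * s = (f * p - (1 - p) * s) / 2 := by
    rw [hq]; field_simp; ring
  have hexp : s * (p / q - 1) + f * ((1 - p) / (1 - q) - 1)
      = -(f * p - (1 - p) * s) ^ 2 / ((s + f) * (4 * q * (1 - q))) := by
    calc s * (p / q - 1) + f * ((1 - p) / (1 - q) - 1)
        = (q - p) * (f * q - (1 - q) * s) / (q * (1 - q)) := by
          field_simp; ring
      _ = _ := by
          rw [hstep, hslope]; field_simp; ring
  have hvar : 4 * q * (1 - q) ≤ 1 := by nlinarith [sq_nonneg (2 * q - 1)]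
  rw [hexp, neg_div, neg_div, neg_le_neg_iff]
  apply div_le_div_of_nonneg_left (sq_nonneg _) (by positivity)
  calc (s + f) * (4 * q * (1 - q)) ≤ (s + f) * 1 := by gcongr
    _ = s + f := mul_one _

lemma mul_pow_mul_pow_le_exp {a p : ℝ} {s f : ℕ} (hp0 : 0 ≤ p) (hp1 : p < 1) (hs : 0 < s)
    (ha : ∀ q : ℝ, 0 < q → q < 1 → a ≤ q ^ (-(s : ℝ)) * (1 - q) ^ (-(f : ℝ))) :
    a * p ^ s * (1 - p) ^ f ≤ exp (-(f * p - (1 - p) * s) ^ 2 / (s + f)) := by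
  obtain ⟨q, hq0, hq1, hE⟩ :=
    exists_tilt_exponent_le (s := s) (f := f) hp0 hp1 (by exact_mod_cast hs) (Nat.cast_nonneg f)
  have h1q : 0 < 1 - q := by linarith
  have haq : a ≤ (q ^ s * (1 - q) ^ f)⁻¹ := by
    have := ha q hq0 hq1
    rwa [rpow_neg hq0.le, rpow_neg h1q.le, rpow_natCast, rpow_natCast, ← mul_inv] at this
  calc a * p ^ s * (1 - p) ^ f = a * (p ^ s * (1 - p) ^ f) := mul_assoc _ _ _
    _ ≤ (q ^ s * (1 - q) ^ f)⁻¹ * (p ^ s * (1 - p) ^ f) := by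
        have : 0 ≤ 1 - p := by linarith
        gcongr
    _ ≤ (q ^ s * (1 - q) ^ f)⁻¹ * (q ^ s * (1 - q) ^ f *
          exp (s * (p / q - 1) + f * ((1 - p) / (1 - q) - 1))) := by
        exact mul_le_mul_of_nonneg_left (pow_mul_pow_le_tilt hp0 hp1.le hq0 hq1 s f)
          (by positivity)
    _ = exp (s * (p / q - 1) + f * ((1 - p) / (1 - q) - 1)) := by
        rw [inv_mul_cancel_left₀ (by positivity)]
    _ ≤ _ := exp_le_exp.2 hE

lemma neg_sq_div_le_of_two_mul_lt_abs {p x s f : ℝ} (hp0 : 0 ≤ p) (hp1 : p ≤ 1) (hx : 0 ≤ x)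
    (hs : 0 < s) (hf : 0 ≤ f) (hf4 : f ≤ 4 * s) (hdev : 2 * x * s < |f * p - (1 - p) * s|) :
    -(f * p - (1 - p) * s) ^ 2 / (s + f) ≤ -(1/3) * s * x ^ 2 * p ^ 2 * (1 - p) := by
  have hD : (2 * x * s) ^ 2 < (f * p - (1 - p) * s) ^ 2 := by
    rw [← sq_abs (f * p - (1 - p) * s)]
    exact pow_lt_pow_left₀ hdev (by positivity) two_ne_zero
  have hp3 : p ^ 2 * (1 - p) ≤ 1 := by
    calc p ^ 2 * (1 - p) ≤ 1 ^ 2 * 1 := by gcongr; linarith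
      _ = 1 := by norm_num
  have hsx : 0 ≤ s * x ^ 2 := by positivity
  have h : (1/3) * s * x ^ 2 * p ^ 2 * (1 - p) ≤ (f * p - (1 - p) * s) ^ 2 / (s + f) := by
    rw [le_div_iff₀ (by linarith)]
    nlinarith [mul_le_mul_of_nonneg_left hp3 hsx, mul_le_mul_of_nonneg_left hf4 hsx]
  rw [neg_div]
  linarith

theorem stmt16_general (p : ℝ) (hp : 0 < p) (hp2 : p < 1/2)
    (a : ℕ → ℕ → ℝ)
    (hbound : ∀ s f : ℕ, 1 ≤ s → 1 ≤ f → f ≤ 4*s →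
      ∀ q : ℝ, 0 < q → q < 1 → a s f ≤ q^(-(s:ℝ)) * (1-q)^(-(f:ℝ))) :
    ∃ ε > 0, ∀ x : ℝ, 0 < x → x < ε → ∀ s : ℕ, 1 ≤ s →
      ∑ f ∈ (Finset.Icc 1 (4*s)).filter
          (fun f : ℕ => |(f:ℝ)*p - (1-p)*(s:ℝ)| > 2*x*(s:ℝ)),
        a s f * p^s * (1-p)^f
      ≤ 4*(s:ℝ) * Real.exp (-(1/3) * s * x^2 * p^2 * (1-p)) := by
  refine ⟨1, one_pos, fun x hx _ s hs => ?_⟩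
  have hp1 : p < 1 := by linarith
  set T := (Finset.Icc 1 (4*s)).filter (fun f : ℕ => |(f:ℝ)*p - (1-p)*(s:ℝ)| > 2*x*(s:ℝ))
  have hterm : ∀ f ∈ T, a s f * p^s * (1-p)^f ≤ exp (-(1/3) * s * x^2 * p^2 * (1-p)) := by
    intro f hf
    obtain ⟨⟨hf1, hf4⟩, hdev⟩ := by simpa only [T, Finset.mem_filter, Finset.mem_Icc] using hf
    refine (mul_pow_mul_pow_le_exp hp.le hp1 hs (hbound s f hs hf1 hf4)).trans ?_
    exact exp_le_exp.2 (neg_sq_div_le_of_two_mul_lt_abs hp.le hp1.le hx.le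
      (by exact_mod_cast hs) (Nat.cast_nonneg f) (by exact_mod_cast hf4) hdev)
  have hcard : T.card ≤ 4*s := (Finset.card_filter_le _ _).trans (by simp)
  refine (Finset.sum_le_card_nsmul T _ _ hterm).trans ?_
  rw [nsmul_eq_mul]
  gcongr
  exact_mod_cast hcard

theorem stmt16 (p : ℝ) (hp : 0 < p) (hp2 : p < 1/2)
    (a : ℕ → ℕ → ℝ) (hnn : ∀ s f, 0 ≤ a s f)
    (hbound : ∀ s f : ℕ, 1 ≤ s → 1 ≤ f → f ≤ 4*s →
      ∀ q : ℝ, 0 < q → q < 1 → a s f ≤ q^(-(s:ℝ)) * (1-q)^(-(f:ℝ))) :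
    ∃ ε > 0, ∀ x : ℝ, 0 < x → x < ε → ∀ s : ℕ, 1 ≤ s →
      ∑ f ∈ (Finset.Icc 1 (4*s)).filter
          (fun f : ℕ => |(f:ℝ)*p - (1-p)*(s:ℝ)| > 2*x*(s:ℝ)),
        a s f * p^s * (1-p)^f
      ≤ 4*(s:ℝ) * Real.exp (-(1/3) * s * x^2 * p^2 * (1-p)) :=
  stmt16_general p hp hp2 a hbound
end
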